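/- arXiv:2407.02377 — 3 statements merged into one kernel-verified Lean document; each statement's English description precedes it below -/
import Mathlib

section
/- For c ∈ ℝ and t in [0,h], e^{ct} B_{i,p,h}(t) = Σ_{n=0}^{∞} (c^n h^n / n!) (i^{(n)}/p^{(n)}) B_{i+n,p+n,h}(t), with the series converging absolutely. -/
/-- Bernstein polynomial `B_{i,p,h}` on `[0,h]`, with the convention that it
vanishes for indices `i` outside `1 ≤ i ≤ p`. -/
noncomputable def bern (p i : ℕ) (h t : ℝ) : ℝ :=
  if 1 ≤ i ∧ i ≤ p then
    (Nat.choose (p - 1) (i - 1) : ℝ) * (t / h) ^ (i - 1) * ((h - t) / h) ^ (p - i)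
  else 0

/-- Rising factorial `x^{(q)} = x (x+1) ⋯ (x+q-1)`. -/
def rising (x q : ℕ) : ℕ := ∏ k ∈ Finset.range q, (x + k)

/-!
Since `i^{(n)} C(p+n-1, i+n-1) = p^{(n)} C(p-1, i-1)` and `h^n (t/h)^n = t^n`, the `n`-th term
of the series equals `(c t)^n / n! · B_{i,p,h}(t)`: the series is the exponential series of
`c t`, scaled by `B_{i,p,h}(t)`.
-/

lemma rising_succ (x n : ℕ) : rising x (n + 1) = rising x n * (x + n) :=
  Finset.prod_range_succ _ _

lemma rising_pos {x : ℕ} (hx : 0 < x) (n : ℕ) : 0 < rising x n :=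
  Finset.prod_pos fun _ _ => by omega

lemma rising_mul_choose_add (a b n : ℕ) :
    rising (a + 1) n * (b + n).choose (a + n) = b.choose a * rising (b + 1) n := by
  induction n with
  | zero => simp [rising]
  | succ n ih =>
    have pascal := Nat.add_one_mul_choose_eq (b + n) (a + n)
    calc rising (a + 1) (n + 1) * (b + (n + 1)).choose (a + (n + 1))
        = rising (a + 1) n * ((b + n + 1).choose (a + n + 1) * (a + n + 1)) := by
          rw [rising_succ]; ring_nf
      _ = rising (a + 1) n * (b + n).choose (a + n) * (b + n + 1) := by rw [← pascal]; ring
      _ = b.choose a * rising (b + 1) (n + 1) := by rw [ih, rising_succ]; ring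

lemma pow_mul_rising_div_mul_bern_add {p i : ℕ} (hi : 1 ≤ i) (hip : i ≤ p) {h : ℝ}
    (hh : h ≠ 0) (t : ℝ) (n : ℕ) :
    h ^ n * ((rising i n : ℝ) / rising p n) * bern (p + n) (i + n) h t
      = t ^ n * bern p i h t := by
  obtain ⟨a, rfl⟩ : ∃ a, i = a + 1 := ⟨i - 1, by omega⟩
  obtain ⟨b, rfl⟩ : ∃ b, p = b + 1 := ⟨p - 1, by omega⟩
  have hrising : (rising (b + 1) n : ℝ) ≠ 0 := by exact_mod_cast (rising_pos b.succ_pos n).ne'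
  have hchoose :
      (rising (a + 1) n : ℝ) * (b + n).choose (a + n) / rising (b + 1) n = b.choose a := by
    rw [div_eq_iff hrising]
    exact_mod_cast rising_mul_choose_add a b n
  have hpow : h ^ n * (t / h) ^ n = t ^ n := by rw [← mul_pow, mul_div_cancel₀ t hh]
  have hidx₁ : b + 1 + n - 1 = b + n := by omega
  have hidx₂ : a + 1 + n - 1 = a + n := by omega
  have hidx₃ : b + 1 + n - (a + 1 + n) = b - a := by omega
  rw [bern, bern, if_pos ⟨by omega, by omega⟩, if_pos ⟨hi, hip⟩, hidx₁, hidx₂, hidx₃,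
    Nat.add_sub_cancel, Nat.add_sub_cancel, Nat.add_sub_add_right]
  calc h ^ n * ((rising (a + 1) n : ℝ) / rising (b + 1) n)
        * ((b + n).choose (a + n) * (t / h) ^ (a + n) * ((h - t) / h) ^ (b - a))
      = (rising (a + 1) n : ℝ) * (b + n).choose (a + n) / rising (b + 1) n
        * (h ^ n * (t / h) ^ n) * (t / h) ^ a * ((h - t) / h) ^ (b - a) := by ring
    _ = t ^ n * (b.choose a * (t / h) ^ a * ((h - t) / h) ^ (b - a)) := by
      rw [hchoose, hpow]; ring

theorem bern_mul_exp_series_general (p : ℕ) (i : ℕ) (hi1 : 1 ≤ i) (hi2 : i ≤ p)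
    (c : ℝ) (h : ℝ) (hh : 0 < h) (t : ℝ) :
    HasSum
      (fun n : ℕ => c ^ n * h ^ n / (Nat.factorial n : ℝ)
        * ((rising i n : ℝ) / (rising p n : ℝ)) * bern (p + n) (i + n) h t)
      (Real.exp (c * t) * bern p i h t) ∧
    Summable (fun n : ℕ => |c ^ n * h ^ n / (Nat.factorial n : ℝ)
        * ((rising i n : ℝ) / (rising p n : ℝ)) * bern (p + n) (i + n) h t|) := by
  have hterm : ∀ n : ℕ, c ^ n * h ^ n / (Nat.factorial n : ℝ)
        * ((rising i n : ℝ) / (rising p n : ℝ)) * bern (p + n) (i + n) h t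
      = (c * t) ^ n / (Nat.factorial n : ℝ) * bern p i h t := fun n => by
    linear_combination
      (c ^ n / (Nat.factorial n : ℝ)) * pow_mul_rising_div_mul_bern_add hi1 hi2 hh.ne' t n
  have hsum : HasSum (fun n : ℕ => (c * t) ^ n / (Nat.factorial n : ℝ) * bern p i h t)
      (Real.exp (c * t) * bern p i h t) := by
    rw [Real.exp_eq_exp_ℝ]
    exact (NormedSpace.expSeries_div_hasSum_exp (c * t)).mul_right _
  simp only [hterm]
  exact ⟨hsum, hsum.summable.abs⟩

theorem bern_mul_exp_series (p : ℕ) (hp : 1 ≤ p) (i : ℕ) (hi1 : 1 ≤ i) (hi2 : i ≤ p)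
    (c : ℝ) (h : ℝ) (hh : 0 < h) (t : ℝ) (ht : t ∈ Set.Icc (0 : ℝ) h) :
    HasSum
      (fun n : ℕ => c ^ n * h ^ n / (Nat.factorial n : ℝ)
        * ((rising i n : ℝ) / (rising p n : ℝ)) * bern (p + n) (i + n) h t)
      (Real.exp (c * t) * bern p i h t) ∧
    Summable (fun n : ℕ => |c ^ n * h ^ n / (Nat.factorial n : ℝ)
        * ((rising i n : ℝ) / (rising p n : ℝ)) * bern (p + n) (i + n) h t|) :=
  bern_mul_exp_series_general p i hi1 hi2 c h hh t
end

section
/- For c ≥ 0, the weighted inner product ∫₀ʰ e^{ct} B_{i,p,h}(t) B_{j,q,h}(t) dt equals h · [C(p-1,i-1) C(q-1,j-1)] / [(p+q-1) C(p+q-2,i+j-2)] · ₁F₁(i+j-1; p+q; ch), where ₁F₁ is Kummer's confluent hypergeometric function. -/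
/-- Kummer confluent hypergeometric function `₁F₁(a; b; z)` for natural parameters. -/
noncomputable def kummer (a b : ℕ) (z : ℝ) : ℝ :=
  ∑' n : ℕ, (rising a n : ℝ) * z ^ n / ((rising b n : ℝ) * (Nat.factorial n : ℝ))

/-!
Both Bernstein polynomials carry the factor `h^{-(p-1)}` resp. `h^{-(q-1)}`, so the integrand is a
constant times `e^{ct} t^m (h - t)^k` with `m = i + j - 2`, `k = p + q - i - j`. Expanding `e^{ct}`
into its power series and integrating termwise (dominated by `e^{|ct|} |t^m (h - t)^k|`) reduces
everything to the Beta integrals `∫₀ʰ t^{n+m} (h - t)^k dt = h^{n+m+k+1} (n+m)! k! / (n+m+k+1)!`,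
and the quotients of factorials that appear are exactly the rising factorials of
`₁F₁(m + 1; m + k + 2; ch)`.
-/

open intervalIntegral
open MeasureTheory (ae_of_all)
open scoped Nat

lemma rising_eq_ascFactorial (x q : ℕ) : rising x q = x.ascFactorial q :=
  (Nat.ascFactorial_eq_prod_range x q).symm

lemma integral_pow_mul_sub_pow_succ (h : ℝ) (m k : ℕ) :
    ((m : ℝ) + 1) * ∫ t in (0 : ℝ)..h, t ^ m * (h - t) ^ (k + 1) =
      ((k : ℝ) + 1) * ∫ t in (0 : ℝ)..h, t ^ (m + 1) * (h - t) ^ k := by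
  have hderiv : ∀ x ∈ Set.uIcc (0 : ℝ) h,
      HasDerivAt (fun t => t ^ (m + 1) * (h - t) ^ (k + 1))
        (((m : ℝ) + 1) * (x ^ m * (h - x) ^ (k + 1)) -
          ((k : ℝ) + 1) * (x ^ (m + 1) * (h - x) ^ k)) x := by
    intro x _
    refine ((hasDerivAt_pow (m + 1) x).fun_mul
      (((hasDerivAt_id' x).const_sub h).fun_pow (k + 1))).congr_deriv ?_
    push_cast
    ring
  have hFTC := integral_eq_sub_of_hasDerivAt hderiv
    ((by fun_prop : Continuous _).intervalIntegrable _ _)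
  rw [integral_sub ((by fun_prop : Continuous _).intervalIntegrable _ _)
    ((by fun_prop : Continuous _).intervalIntegrable _ _), integral_const_mul,
    integral_const_mul] at hFTC
  simpa [sub_eq_zero] using hFTC

theorem integral_pow_mul_sub_pow (h : ℝ) (m k : ℕ) :
    ∫ t in (0 : ℝ)..h, t ^ m * (h - t) ^ k = h ^ (m + k + 1) * (m ! * k !) / (m + k + 1)! := by
  induction k generalizing m with
  | zero => simp [integral_pow, Nat.factorial_succ, field]
  | succ k ih =>
    have hstep := integral_pow_mul_sub_pow_succ h m k
    rw [ih (m + 1)] at hstep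
    rw [← mul_right_inj' (by positivity : (m : ℝ) + 1 ≠ 0), hstep,
      show m + 1 + k + 1 = m + (k + 1) + 1 by omega, Nat.factorial_succ m, Nat.factorial_succ k]
    push_cast
    ring

theorem hasSum_intervalIntegral_exp_mul {g : ℝ → ℝ} (hg : Continuous g) (c a b : ℝ) :
    HasSum (fun n : ℕ => ∫ t in a..b, (c * t) ^ n / n ! * g t)
      (∫ t in a..b, Real.exp (c * t) * g t) := by
  have hexp (x : ℝ) : HasSum (fun n : ℕ => x ^ n / n !) (Real.exp x) := by
    rw [Real.exp_eq_exp_ℝ]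
    exact NormedSpace.expSeries_div_hasSum_exp x
  refine hasSum_integral_of_dominated_convergence (fun n t => |c * t| ^ n / n ! * |g t|)
    (fun n => (by fun_prop : Continuous _).aestronglyMeasurable)
    (fun n => ae_of_all _ fun t _ => ?_) (ae_of_all _ fun t _ => ((hexp _).mul_right _).summable)
    ?_ (ae_of_all _ fun t _ => (hexp _).mul_right _)
  · rw [Real.norm_eq_abs, abs_mul, abs_div, abs_pow, Nat.abs_cast]
  · simp_rw [fun t => ((hexp |c * t|).mul_right |g t|).tsum_eq]
    exact (by fun_prop : Continuous _).intervalIntegrable _ _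

theorem integral_exp_mul_pow_mul_sub_pow (c h : ℝ) (m k : ℕ) :
    ∫ t in (0 : ℝ)..h, Real.exp (c * t) * (t ^ m * (h - t) ^ k) =
      h ^ (m + k + 1) * (m ! * k !) / (m + k + 1)! * kummer (m + 1) (m + k + 2) (c * h) := by
  have hterm (n : ℕ) : ∫ t in (0 : ℝ)..h, (c * t) ^ n / n ! * (t ^ m * (h - t) ^ k) =
      h ^ (m + k + 1) * (m ! * k !) / (m + k + 1)! *
        (rising (m + 1) n * (c * h) ^ n / (rising (m + k + 2) n * n !)) := by
    have hnum : (m ! : ℝ) * rising (m + 1) n = (m + n)! := by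
      rw [rising_eq_ascFactorial]; exact_mod_cast Nat.factorial_mul_ascFactorial m n
    have hden : ((m + k + 1)! : ℝ) * rising (m + k + 2) n = (m + n + k + 1)! := by
      rw [rising_eq_ascFactorial, show m + n + k + 1 = m + k + 1 + n by omega]
      exact_mod_cast Nat.factorial_mul_ascFactorial (m + k + 1) n
    calc _ = c ^ n / n ! * ∫ t in (0 : ℝ)..h, t ^ (m + n) * (h - t) ^ k := by
          rw [← integral_const_mul]
          congr 1 with t
          ring
      _ = c ^ n / n ! * (h ^ (m + n + k + 1) * ((m + n)! * k !) / (m + n + k + 1)!) := by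
          rw [integral_pow_mul_sub_pow]
      _ = _ := by
          rw [← hnum, ← hden]
          field_simp
          ring
  rw [kummer, ← tsum_mul_left, ← tsum_congr hterm,
    (hasSum_intervalIntegral_exp_mul (by fun_prop) c 0 h).tsum_eq]

lemma bern_eq {p i : ℕ} (hi1 : 1 ≤ i) (hi2 : i ≤ p) (h t : ℝ) :
    bern p i h t = (p - 1).choose (i - 1) * (t ^ (i - 1) * (h - t) ^ (p - i)) / h ^ (p - 1) := by
  rw [bern, if_pos ⟨hi1, hi2⟩, div_pow, div_pow, mul_assoc, div_mul_div_comm, ← pow_add,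
    show i - 1 + (p - i) = p - 1 by omega]
  ring

lemma bern_mul_bern {p q i j : ℕ} (hi1 : 1 ≤ i) (hi2 : i ≤ p) (hj1 : 1 ≤ j) (hj2 : j ≤ q)
    (h t : ℝ) :
    bern p i h t * bern q j h t =
      (p - 1).choose (i - 1) * (q - 1).choose (j - 1) / h ^ (p + q - 2) *
        (t ^ (i + j - 2) * (h - t) ^ (p + q - i - j)) := by
  rw [bern_eq hi1 hi2, bern_eq hj1 hj2, div_mul_div_comm, ← pow_add,
    show p - 1 + (q - 1) = p + q - 2 by omega, show i + j - 2 = (i - 1) + (j - 1) by omega,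
    show p + q - i - j = (p - i) + (q - j) by omega]
  ring

lemma factorial_add_add_one (m k : ℕ) :
    (m + k + 1)! = (m + k + 1) * (m + k).choose m * m ! * k ! := by
  rw [Nat.factorial_succ, ← Nat.add_choose_mul_factorial_mul_factorial, Nat.choose_symm_add]
  ring

theorem bern_weighted_inner_general (p q : ℕ) (i j : ℕ)
    (hi1 : 1 ≤ i) (hi2 : i ≤ p) (hj1 : 1 ≤ j) (hj2 : j ≤ q)
    (c : ℝ) (h : ℝ) :
    ∫ t in (0 : ℝ)..h, Real.exp (c * t) * bern p i h t * bern q j h t =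
      h * ((Nat.choose (p - 1) (i - 1) : ℝ) * (Nat.choose (q - 1) (j - 1) : ℝ))
          / (((p : ℝ) + q - 1) * (Nat.choose (p + q - 2) (i + j - 2) : ℝ))
        * kummer (i + j - 1) (p + q) (c * h) := by
  rcases eq_or_ne h 0 with rfl | hh
  · simp
  set m := i + j - 2
  set k := p + q - i - j
  have hpq : p + q = m + k + 2 := by omega
  have hintegrand (t : ℝ) : Real.exp (c * t) * bern p i h t * bern q j h t =
      (p - 1).choose (i - 1) * (q - 1).choose (j - 1) / h ^ (p + q - 2) *
        (Real.exp (c * t) * (t ^ m * (h - t) ^ k)) := by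
    rw [mul_assoc, bern_mul_bern hi1 hi2 hj1 hj2, mul_left_comm]
  have hpq' : (p : ℝ) + q - 1 = m + k + 1 := by
    rw [← Nat.cast_add, hpq]
    push_cast
    ring
  have hchoose : ((m + k).choose m : ℝ) ≠ 0 := by
    exact_mod_cast (Nat.choose_pos (Nat.le_add_right m k)).ne'
  have hsucc : (m : ℝ) + k + 1 ≠ 0 := by positivity
  simp_rw [hintegrand, integral_const_mul, integral_exp_mul_pow_mul_sub_pow]
  rw [hpq', show i + j - 1 = m + 1 by omega, show p + q - 2 = m + k by omega, hpq,
    factorial_add_add_one]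
  push_cast
  field_simp
  ring

theorem bern_weighted_inner (p q : ℕ) (hp : 1 ≤ p) (hq : 1 ≤ q) (i j : ℕ)
    (hi1 : 1 ≤ i) (hi2 : i ≤ p) (hj1 : 1 ≤ j) (hj2 : j ≤ q)
    (c : ℝ) (hc : 0 ≤ c) (h : ℝ) (hh : 0 < h) :
    ∫ t in (0 : ℝ)..h, Real.exp (c * t) * bern p i h t * bern q j h t =
      h * ((Nat.choose (p - 1) (i - 1) : ℝ) * (Nat.choose (q - 1) (j - 1) : ℝ))
          / (((p : ℝ) + q - 1) * (Nat.choose (p + q - 2) (i + j - 2) : ℝ))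
        * kummer (i + j - 1) (p + q) (c * h) :=
  bern_weighted_inner_general p q i j hi1 hi2 hj1 hj2 c h
end

section
/- The function g(t) = 2t(10 - t²)/(20 + 3t²) - sin t satisfies g(t) = -t³/12 + O(t⁵) as t → 0; i.e., there exist C, δ > 0 with |g(t) + t³/12| ≤ C t⁵ for |t| ≤ δ. -/
/-! The rational term agrees with `t - t³/4` up to `3t⁵ / (4(20 + 3t²))`, while `sin t` agrees with
`t - t³/6` up to `|t|⁵/100` (`Real.sin_bound`); the cubic terms differ by exactly `-t³/12`. -/

lemma pade_sub_eq (t : ℝ) :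
    2 * t * (10 - t ^ 2) / (20 + 3 * t ^ 2) - (t - t ^ 3 / 4) = 3 * t ^ 5 / (4 * (20 + 3 * t ^ 2)) := by
  field_simp
  ring

lemma abs_pade_sub_le (t : ℝ) :
    |2 * t * (10 - t ^ 2) / (20 + 3 * t ^ 2) - (t - t ^ 3 / 4)| ≤ 3 / 80 * |t| ^ 5 := by
  have hden : 0 < 4 * (20 + 3 * t ^ 2) := by positivity
  rw [pade_sub_eq, abs_div, abs_of_pos hden, abs_mul, abs_pow, div_le_iff₀ hden]
  nlinarith [pow_nonneg (abs_nonneg t) 5, sq_nonneg t]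

theorem velocity_error_expansion :
    ∃ C δ : ℝ, 0 < C ∧ 0 < δ ∧ ∀ t : ℝ, |t| ≤ δ →
      |(2 * t * (10 - t ^ 2) / (20 + 3 * t ^ 2) - Real.sin t) + t ^ 3 / 12| ≤ C * |t| ^ 5 := by
  refine ⟨3 / 80 + 1 / 100, 1, by norm_num, one_pos, fun t ht => ?_⟩
  have hsplit : (2 * t * (10 - t ^ 2) / (20 + 3 * t ^ 2) - Real.sin t) + t ^ 3 / 12 =
      (2 * t * (10 - t ^ 2) / (20 + 3 * t ^ 2) - (t - t ^ 3 / 4)) -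
        (Real.sin t - (t - t ^ 3 / 6)) := by
    ring
  calc _ ≤ |2 * t * (10 - t ^ 2) / (20 + 3 * t ^ 2) - (t - t ^ 3 / 4)| +
        |Real.sin t - (t - t ^ 3 / 6)| := hsplit ▸ abs_sub _ _
    _ ≤ 3 / 80 * |t| ^ 5 + |t| ^ 5 / 100 := add_le_add (abs_pade_sub_le t) (Real.sin_bound ht)
    _ = (3 / 80 + 1 / 100) * |t| ^ 5 := by ring
end
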